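/- For every swap sequence that transforms the initial placement of the constructed token swapping instance into its target placement, the total number of moves (which is twice the number of swaps) equals Σ_{t∈A} d_t + 2·Σ_t c_t, where the second sum ranges over all tokens. -/

import Mathlib

namespace UnweightedTS

/-- Vertices of the constructed tree: the root, ordering-gadget vertices `ord d`
(distance `d+1` from the root), slot-gadget path vertices `slot i d` (distance `d+1`
from the root in slot gadget `i`), and nooks.  (Coordinates range over all of `ℕ`;
the graph below only has edges between the vertices of the construction, so the
remaining vertices are isolated and carry no tokens.) -/
inductive Vtx (m : ℕ) where
  | root : Vtx m
  | ord : ℕ → Vtx m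
  | slot : Fin m → ℕ → Vtx m
  | nook : Fin m → Vtx m
deriving DecidableEq

/-- Adjacency generator for the tree: `len i` = length of the path of slot gadget `i`,
`lenOrd` = length of the ordering path, `nd` = distance from the root of the path
vertex to which the nook of each slot gadget is attached. -/
def rel {m : ℕ} (len : Fin m → ℕ) (lenOrd nd : ℕ) : Vtx m → Vtx m → Prop
  | .root, .ord d => d = 0 ∧ 0 < lenOrd
  | .ord d, .ord d' => d' = d + 1 ∧ d' < lenOrd
  | .root, .slot i d => d = 0 ∧ 0 < len i
  | .slot i d, .slot i' d' => i = i' ∧ d' = d + 1 ∧ d' < len i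
  | .slot i d, .nook i' => i = i' ∧ d + 1 = nd ∧ d < len i
  | _, _ => False

/-- The constructed tree, as a simple graph. -/
def Tree {m : ℕ} (len : Fin m → ℕ) (lenOrd nd : ℕ) : SimpleGraph (Vtx m) :=
  SimpleGraph.fromRel (rel len lenOrd nd)

/-- Swap the two values `e.1`, `e.2`. -/
def swapV {V : Type*} [DecidableEq V] (e : V × V) (v : V) : V :=
  if v = e.1 then e.2 else if v = e.2 then e.1 else v

/-- Apply a sequence of swaps to a token placement (token ↦ vertex). -/
def applySwaps {T V : Type*} [DecidableEq V] (σ : List (V × V)) (f : T → V) : T → V :=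
  σ.foldl (fun g e => fun t => swapV e (g t)) f

/-- Apply a sequence of star swaps (each given by a leaf) to a placement on the star
with center `none` and leaves `some l`. -/
def starApply {L : Type*} [DecidableEq L] (σ : List L) (f : Option L → Option L) :
    Option L → Option L :=
  σ.foldl (fun g l => fun t => swapV ((none : Option L), some l) (g t)) f

/-- The Star STS instance is a YES instance. -/
def StarSTSYes {L : Type*} [DecidableEq L] (π : Equiv.Perm (Option L)) (σ : List L) : Prop :=
  ∃ σ' : List L, σ'.Sublist σ ∧ starApply σ' id = ⇑π

/-- `k = (mn)^25`, the length of a big segment. -/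
def kk (m n : ℕ) : ℕ := (m * n) ^ 25

/-- `k' = k / n^8`, the length of a padding segment. -/
def kk' (m n : ℕ) : ℕ := kk m n / n ^ 8

variable {m n : ℕ}

/-- `nᵢ`: the number of occurrences of slot `i` in the swap sequence. -/
def cnt (s : Fin n → Fin m) (i : Fin m) : ℕ :=
  (Finset.univ.filter fun j : Fin n => s j = i).card

/-- Length of the ordering path: `nk + nmk'`. -/
def lenOrd (m n : ℕ) : ℕ := n * kk m n + n * m * kk' m n

/-- Length of the path of slot gadget `i`: `nᵢ k + n k'`. -/
def lenSlot (s : Fin n → Fin m) (i : Fin m) : ℕ := cnt s i * kk m n + n * kk' m n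

/-- The non-item tokens: big segments `xⱼ`, `yⱼ` of `k` tokens each, and padding
segments `p_{i,j}`, `q_{i,j}` of `k'` tokens each (in this order of the sum). -/
abbrev NonItem (m n : ℕ) :=
  (Fin n × Fin (kk m n)) ⊕ (Fin n × Fin (kk m n)) ⊕
    (Fin m × Fin n × Fin (kk' m n)) ⊕ (Fin m × Fin n × Fin (kk' m n))

/-- All tokens: item tokens (`Option (Fin m)`, `none` = item 0) and the non-item
tokens. -/
abbrev Tok (m n : ℕ) := Option (Fin m) ⊕ NonItem m n

/-- The constructed tree: ordering path of length `nk + nmk'`, slot path `i` of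
length `nᵢk + nk'`, nooks attached at distance `k` from the root. -/
def TheGraph (s : Fin n → Fin m) : SimpleGraph (Vtx m) :=
  Tree (lenSlot s) (lenOrd m n) (kk m n)

/-- The distance from the root, in slot gadget `i`, at which the block of segment
`q_{i,j}` (preceded by `yⱼ` when `s j = i`) starts in the initial configuration. -/
def offQ (s : Fin n → Fin m) (i : Fin m) (j : Fin n) : ℕ :=
  ∑ j' ∈ Finset.univ.filter (fun j' : Fin n => j'.val < j.val),
    (kk' m n + if s j' = i then kk m n else 0)

/-- The slot occurring next after position `j` in the swap sequence, if any. -/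
def nxt (s : Fin n → Fin m) (j : Fin n) : Option (Fin m) :=
  if h : j.val + 1 < n then some (s ⟨j.val + 1, h⟩) else none

/-- The rank (`0`-based position) of the padding segment `q_{i,j}` among the `m`
padding segments following `yⱼ` in the target configuration of the ordering gadget:
`q_{s_{j+1},j}` first, `q_{s_j,j}` last, and the others in increasing order of `i`. -/
def rho (s : Fin n → Fin m) (i : Fin m) (j : Fin n) : ℕ :=
  if some i = nxt s j then 0
  else if i = s j then m - 1
  else (if (nxt s j).isSome then 1 else 0) +
    (Finset.univ.filter fun i' : Fin m =>
      i'.val < i.val ∧ i' ≠ s j ∧ some i' ≠ nxt s j).card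

/-- The distance from the root, in slot gadget `i`, at which the block of segment
`p_{i,j}` (followed by `xⱼ` when `s j = i`) starts in the target configuration. -/
def tOffP (s : Fin n → Fin m) (i : Fin m) (j : Fin n) : ℕ :=
  ∑ j' ∈ Finset.univ.filter (fun j' : Fin n => j.val < j'.val),
    (kk' m n + if s j' = i then kk m n else 0)

/-- The initial placement of the tokens.  Item `0` is at the root and item `i` at the
nook of slot gadget `i`.  The ordering gadget contains, from the root outward, the
blocks `x₁, p_{·,1}, x₂, p_{·,2}, …, xₙ, p_{·,n}` (the `m` padding blocks after `xⱼ`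
ordered by `rho`); slot gadget `i` contains, from the root outward, the blocks
`q_{i,1},…,q_{i,n}` with `yⱼ` inserted immediately on the root side of `q_{i,j}`
whenever `s j = i`.  Within a segment the coordinate `a` increases away from the root
in slot gadgets and away from the root in the ordering gadget. -/
def initTok (s : Fin n → Fin m) : Tok m n → Vtx m
  | Sum.inl none => .root
  | Sum.inl (some i) => .nook i
  | Sum.inr (Sum.inl (j, a)) => .ord (j.val * (kk m n + m * kk' m n) + a.val)
  | Sum.inr (Sum.inr (Sum.inl (j, a))) => .slot (s j) (offQ s (s j) j + a.val)
  | Sum.inr (Sum.inr (Sum.inr (Sum.inl (i, j, a)))) =>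
      .ord (j.val * (kk m n + m * kk' m n) + kk m n + rho s i j * kk' m n + a.val)
  | Sum.inr (Sum.inr (Sum.inr (Sum.inr (i, j, a)))) =>
      .slot i (offQ s i j + (if s j = i then kk m n else 0) + a.val)

/-- The target placement of the tokens.  Item `o` goes to the position of item `π o`;
the ordering gadget contains, from its far end toward the root, the blocks
`y₁, q_{·,1}, y₂, q_{·,2}, …, yₙ, q_{·,n}` (the `m` padding blocks after `yⱼ` ordered
by `rho`); slot gadget `i` contains, from the root outward, the blocks
`p_{i,n},…,p_{i,1}` with `xⱼ` inserted immediately after (away from the root)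
`p_{i,j}` whenever `s j = i`.  The left-to-right order of the tokens within each
segment is the same as in the initial configuration. -/
def tgtTok (s : Fin n → Fin m) (π : Equiv.Perm (Option (Fin m))) : Tok m n → Vtx m
  | Sum.inl o => (match π o with | none => .root | some i => .nook i)
  | Sum.inr (Sum.inl (j, a)) =>
      .slot (s j) (tOffP s (s j) j + kk' m n + (kk m n - 1 - a.val))
  | Sum.inr (Sum.inr (Sum.inl (j, a))) =>
      .ord (lenOrd m n - 1 - (j.val * (kk m n + m * kk' m n) + a.val))
  | Sum.inr (Sum.inr (Sum.inr (Sum.inl (i, j, a)))) =>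
      .slot i (tOffP s i j + (kk' m n - 1 - a.val))
  | Sum.inr (Sum.inr (Sum.inr (Sum.inr (i, j, a)))) =>
      .ord (lenOrd m n - 1 -
        (j.val * (kk m n + m * kk' m n) + kk m n + rho s i j * kk' m n + a.val))

/-- `d_t`: the tree distance between token `t`'s initial and target vertices. -/
noncomputable def dd (s : Fin n → Fin m) (π : Equiv.Perm (Option (Fin m)))
    (t : Tok m n) : ℕ :=
  (TheGraph s).dist (initTok s t) (tgtTok s π t)

end UnweightedTS

namespace UnweightedTS

variable {m n : ℕ}

/-- The placement after the first `τ` swaps of `σ` (time `τ`). -/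
def placeAt (σ : List (Vtx m × Vtx m)) (f : Tok m n → Vtx m) (τ : ℕ) : Tok m n → Vtx m :=
  applySwaps (σ.take τ) f

/-- `isLeftMove u v` holds when a token moving across an edge from `u` to `v` makes a
*left* move: towards the root within a slot gadget (including out of a nook), or away
from the root within the ordering gadget. -/
def isLeftMove : Vtx m → Vtx m → Bool
  | .root, .ord _ => true
  | .ord _, .root => false
  | .ord d, .ord d' => decide (d < d')
  | .root, .slot _ _ => false
  | .slot _ _, .root => true
  | .slot _ d, .slot _ d' => decide (d' < d)
  | .nook _, .slot _ _ => true
  | .slot _ _, .nook _ => false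
  | _, _ => false

/-- A token of a `y` or `q` segment (initial vertex in a slot gadget). -/
def isSlotTok : Tok m n → Prop
  | Sum.inr (Sum.inr (Sum.inl _)) => True
  | Sum.inr (Sum.inr (Sum.inr (Sum.inr _))) => True
  | _ => False

/-- A token of an `x` or `p` segment (initial vertex in the ordering gadget). -/
def isNonSlotTok : Tok m n → Prop
  | Sum.inr (Sum.inl _) => True
  | Sum.inr (Sum.inr (Sum.inr (Sum.inl _))) => True
  | _ => False

/-- `isContrary t u v` holds when a move of token `t` from `u` to `v` is a *contrary*
move: a right move of a slot token, a right move of an item token, or a left move of a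
non-slot token. -/
def isContrary (t : Tok m n) (u v : Vtx m) : Bool :=
  match t with
  | Sum.inr (Sum.inl _) => isLeftMove u v
  | Sum.inr (Sum.inr (Sum.inr (Sum.inl _))) => isLeftMove u v
  | _ => !isLeftMove u v

/-- `c_t`: the number of contrary moves made by token `t` during the swap sequence
(starting from the placement `f`). -/
def cCount (t : Tok m n) : List (Vtx m × Vtx m) → (Tok m n → Vtx m) → ℕ
  | [], _ => 0
  | e :: rest, f =>
      ((if f t = e.1 ∧ isContrary t e.1 e.2 = true then 1 else 0) +
        (if f t = e.2 ∧ isContrary t e.2 e.1 = true then 1 else 0)) +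
        cCount t rest (fun t' => swapV e (f t'))

/-- Membership of a vertex in a gadget (`none` = the ordering gadget, `some i` = slot
gadget `i`, which includes its nook).  The root belongs to no gadget. -/
def memGadget : Vtx m → Option (Fin m) → Prop
  | .ord _, none => True
  | .slot i _, some i' => i = i'
  | .nook i, some i' => i = i'
  | _, _ => False

/-- The pair of tokens `t₁`, `t₂` is exchanged by the swap at step `idx` of `σ`. -/
def swapsPairAt (σ : List (Vtx m × Vtx m)) (f : Tok m n → Vtx m) (idx : ℕ)
    (t₁ t₂ : Tok m n) : Prop :=
  ∃ h : idx < σ.length,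
    (placeAt σ f idx t₁ = (σ.get ⟨idx, h⟩).1 ∧ placeAt σ f idx t₂ = (σ.get ⟨idx, h⟩).2) ∨
    (placeAt σ f idx t₁ = (σ.get ⟨idx, h⟩).2 ∧ placeAt σ f idx t₂ = (σ.get ⟨idx, h⟩).1)

/-- No pair of tokens swaps with each other more than once during `σ`. -/
def MinimalSeq (σ : List (Vtx m × Vtx m)) (f : Tok m n → Vtx m) : Prop :=
  ∀ (t₁ t₂ : Tok m n) (i₁ i₂ : ℕ), i₁ < i₂ →
    swapsPairAt σ f i₁ t₁ t₂ → ¬ swapsPairAt σ f i₂ t₁ t₂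

/-- The gadget containing a vertex, if any. -/
def gadgetOfV : Vtx m → Option (Fin m)
  | .slot i _ => some i
  | .nook i => some i
  | _ => none

/-- The free item token at time `τ`: the item token that was most recently at the
root (initially item `0`, i.e. `none`). -/
noncomputable def freeAt (σ : List (Vtx m × Vtx m)) (f : Tok m n → Vtx m) :
    ℕ → Option (Fin m)
  | 0 => none
  | τ + 1 =>
      if h : ∃ o : Option (Fin m), placeAt σ f (τ + 1) (Sum.inl o) = Vtx.root then
        h.choose
      else freeAt σ f τ

/-- The exchange sequence `χ` built from the first `τ` steps: each time an item token
that was just in slot gadget `i` becomes the new free item token, `i` is appended. -/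
noncomputable def chiList (σ : List (Vtx m × Vtx m)) (f : Tok m n → Vtx m) :
    ℕ → List (Fin m)
  | 0 => []
  | τ + 1 =>
      chiList σ f τ ++
        (if freeAt σ f (τ + 1) ≠ freeAt σ f τ then
          (match gadgetOfV (placeAt σ f τ (Sum.inl (freeAt σ f (τ + 1)))) with
            | some i => [i]
            | none => [])
        else [])

end UnweightedTS

/-!
Let `height` be the signed distance from the root, negative in the ordering gadget, and weigh
the height of a token by `-1` if it starts in the ordering gadget and by `+1` otherwise. A
contrary move raises the weighted height of the moving token by one and every other move
lowers it by one. The tokens occupy every vertex of the tree, so each swap makes exactly two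
moves, and over the whole sequence the total weighted height drops by the number of moves
minus `2 * ∑ c_t`. An item token ends at the height it starts from, and a non-item token
travels between a slot gadget and the ordering gadget through the root, so its weighted
height drops by exactly `d_t`.
-/

namespace UnweightedTS

open Finset

lemma swapV_eq_swap {V : Type*} [DecidableEq V] (e : V × V) :
    swapV e = ⇑(Equiv.swap e.1 e.2) := by
  funext v
  simp [swapV, Equiv.swap_apply_def]

lemma applySwaps_cons {T V : Type*} [DecidableEq V] (e : V × V) (σ : List (V × V))
    (f : T → V) : applySwaps (e :: σ) f = applySwaps σ (swapV e ∘ f) := rfl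

section Tree

variable {m : ℕ} {len : Fin m → ℕ} {L k : ℕ}

def height (k : ℕ) : Vtx m → ℤ
  | .root => 0
  | .ord d => -(d + 1 : ℤ)
  | .slot _ d => d + 1
  | .nook _ => k + 1

lemma tree_adj {u v : Vtx m} :
    (Tree len L k).Adj u v ↔ u ≠ v ∧ (rel len L k u v ∨ rel len L k v u) := by
  simp [Tree, SimpleGraph.fromRel_adj]

lemma height_of_adj {u v : Vtx m} (h : (Tree len L k).Adj u v) :
    height k v = height k u + if isLeftMove u v then -1 else 1 := by
  obtain ⟨-, h | h⟩ := tree_adj.1 h <;> rcases u with _ | d | ⟨i, d⟩ | i <;>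
    rcases v with _ | d' | ⟨i', d'⟩ | i' <;> simp_all [rel, height, isLeftMove] <;> omega

lemma natAbs_height_sub_le_length {u v : Vtx m} (w : (Tree len L k).Walk u v) :
    (height k u - height k v).natAbs ≤ w.length := by
  induction w with
  | nil => simp
  | cons h w ih =>
    rw [SimpleGraph.Walk.length_cons, height_of_adj h] at *
    split_ifs at * <;> omega

lemma exists_walk_slot_root {i : Fin m} {d : ℕ} (hd : d < len i) :
    ∃ w : (Tree len L k).Walk (.slot i d) .root, w.length = d + 1 := by
  induction d with
  | zero => exact ⟨.cons (tree_adj.2 ⟨by simp, .inr (by simp [rel, hd])⟩) .nil, rfl⟩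
  | succ d ih =>
    obtain ⟨w, hw⟩ := ih (by omega)
    exact ⟨.cons (tree_adj.2 ⟨by simp, .inr (by simp [rel, hd])⟩) w, by simp [hw]⟩

lemma exists_walk_ord_root {d : ℕ} (hd : d < L) :
    ∃ w : (Tree len L k).Walk (.ord d) .root, w.length = d + 1 := by
  induction d with
  | zero => exact ⟨.cons (tree_adj.2 ⟨by simp, .inr (by simp [rel, hd])⟩) .nil, rfl⟩
  | succ d ih =>
    obtain ⟨w, hw⟩ := ih (by omega)
    exact ⟨.cons (tree_adj.2 ⟨by simp, .inr (by simp [rel, hd])⟩) w, by simp [hw]⟩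

lemma dist_slot_ord {i : Fin m} {d d' : ℕ} (hd : d < len i) (hd' : d' < L) :
    (Tree len L k).dist (.slot i d) (.ord d') = d + 1 + (d' + 1) := by
  obtain ⟨w₁, hw₁⟩ := exists_walk_slot_root (L := L) (k := k) hd
  obtain ⟨w₂, hw₂⟩ := exists_walk_ord_root (len := len) (k := k) hd'
  apply le_antisymm
  · simpa [hw₁, hw₂] using SimpleGraph.dist_le (w₁.append w₂.reverse)
  · obtain ⟨w, hw⟩ := (w₁.append w₂.reverse).reachable.exists_walk_length_eq_dist
    have := natAbs_height_sub_le_length (k := k) w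
    simp only [height] at this
    omega

def treeVerts (len : Fin m → ℕ) (L : ℕ) : Finset (Vtx m) :=
  {.root} ∪ (range L).image .ord ∪ univ.biUnion (fun i => (range (len i)).image (.slot i)) ∪
    univ.image .nook

lemma mem_treeVerts {v : Vtx m} :
    v ∈ treeVerts len L ↔ match v with
      | .root => True
      | .ord d => d < L
      | .slot i d => d < len i
      | .nook _ => True := by
  rcases v with _ | d | ⟨i, d⟩ | i <;> simp [treeVerts]

lemma card_treeVerts : #(treeVerts len L) = 1 + L + ∑ i, len i + m := by
  rw [treeVerts, card_union_of_disjoint, card_union_of_disjoint, card_union_of_disjoint,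
    card_biUnion]
  · simp [card_image_of_injective _ (fun _ _ => Vtx.ord.inj),
      card_image_of_injective _ (fun _ _ => Vtx.nook.inj),
      fun i : Fin m => card_image_of_injective (range (len i))
        (fun _ _ (h : Vtx.slot i _ = _) => (Vtx.slot.inj h).2)]
  · intro i _ j _ hij
    simp [Function.onFun, disjoint_left, hij.symm]
  all_goals simp only [disjoint_left]; grind

lemma mem_treeVerts_of_adj {u v : Vtx m} (h : (Tree len L k).Adj u v) :
    u ∈ treeVerts len L := by
  obtain ⟨-, h | h⟩ := tree_adj.1 h <;> rcases u with _ | d | ⟨i, d⟩ | i <;>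
    rcases v with _ | d' | ⟨i', d'⟩ | i' <;> simp only [rel] at h <;>
    simp only [mem_treeVerts] <;> grind

end Tree

section Potential

variable {m n : ℕ} {len : Fin m → ℕ} {L k : ℕ}

def tokSign : Tok m n → ℤ
  | Sum.inr (Sum.inl _) => -1
  | Sum.inr (Sum.inr (Sum.inr (Sum.inl _))) => -1
  | _ => 1

lemma tokSign_mul_height_sub (t : Tok m n) {u v : Vtx m} (h : (Tree len L k).Adj u v) :
    tokSign t * (height k v - height k u) = if isContrary t u v then 1 else -1 := by
  rw [height_of_adj h]
  rcases t with (_ | _) | (_ | _ | _ | _) <;>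
    cases hl : isLeftMove u v <;> simp [tokSign, isContrary, hl]

def potential (k : ℕ) (f : Tok m n → Vtx m) : ℤ :=
  ∑ t, tokSign t * height k (f t)

def contraryStep (t : Tok m n) (e : Vtx m × Vtx m) (f : Tok m n → Vtx m) : ℕ :=
  (if f t = e.1 ∧ isContrary t e.1 e.2 = true then 1 else 0) +
    (if f t = e.2 ∧ isContrary t e.2 e.1 = true then 1 else 0)

lemma cCount_cons (t : Tok m n) (e : Vtx m × Vtx m) (σ : List (Vtx m × Vtx m))
    (f : Tok m n → Vtx m) :
    cCount t (e :: σ) f = contraryStep t e f + cCount t σ (swapV e ∘ f) := rfl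

lemma tokSign_mul_height_swapV_sub (t : Tok m n) (f : Tok m n → Vtx m)
    {e : Vtx m × Vtx m} (he : (Tree len L k).Adj e.1 e.2) :
    tokSign t * (height k (swapV e (f t)) - height k (f t)) =
      2 * contraryStep t e f - if f t = e.1 ∨ f t = e.2 then 1 else 0 := by
  have hne := he.ne
  by_cases h₁ : f t = e.1
  · have := tokSign_mul_height_sub t he
    simp only [swapV, contraryStep, h₁, hne] at *
    split_ifs at * <;> simp_all
  · by_cases h₂ : f t = e.2
    · have := tokSign_mul_height_sub t he.symm
      simp only [swapV, contraryStep, h₂, hne.symm] at *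
      split_ifs at * <;> simp_all
    · simp [swapV, contraryStep, h₁, h₂]

lemma potential_swapV {f : Tok m n → Vtx m} (hf : Function.Injective f)
    {e : Vtx m × Vtx m} (he : (Tree len L k).Adj e.1 e.2)
    {t₁ t₂ : Tok m n} (h₁ : f t₁ = e.1) (h₂ : f t₂ = e.2) :
    potential k (swapV e ∘ f) = potential k f + 2 * ∑ t, (contraryStep t e f : ℤ) - 2 := by
  have hmoved : univ.filter (fun t => f t = e.1 ∨ f t = e.2) = {t₁, t₂} := by
    ext t
    simp only [mem_filter, mem_univ, true_and, mem_insert, mem_singleton, ← h₁, ← h₂,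
      hf.eq_iff]
  have hne : t₁ ≠ t₂ := fun h => he.ne (by rw [← h₁, ← h₂, h])
  have hdiff : potential k (swapV e ∘ f) - potential k f =
      ∑ t, (2 * (contraryStep t e f : ℤ) - if f t = e.1 ∨ f t = e.2 then 1 else 0) := by
    rw [potential, potential, ← sum_sub_distrib]
    exact sum_congr rfl fun t _ => by
      rw [Function.comp_apply, ← mul_sub, tokSign_mul_height_swapV_sub t f he]
  rw [sum_sub_distrib, ← mul_sum, sum_boole, hmoved, card_pair hne] at hdiff
  push_cast at hdiff
  linarith

lemma potential_applySwaps (σ : List (Vtx m × Vtx m))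
    (hσ : ∀ e ∈ σ, (Tree len L k).Adj e.1 e.2) (f : Tok m n → Vtx m)
    (hf : Function.Injective f) (hsurj : ∀ v ∈ treeVerts len L, ∃ t, f t = v) :
    2 * σ.length + potential k (applySwaps σ f) =
      potential k f + 2 * ∑ t, (cCount t σ f : ℤ) := by
  induction σ generalizing f with
  | nil => simp [applySwaps, cCount]
  | cons e σ ih =>
    have he := hσ e List.mem_cons_self
    obtain ⟨t₁, h₁⟩ := hsurj _ (mem_treeVerts_of_adj he)
    obtain ⟨t₂, h₂⟩ := hsurj _ (mem_treeVerts_of_adj he.symm)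
    have hf' : Function.Injective (swapV e ∘ f) := by
      rw [swapV_eq_swap]
      exact (Equiv.injective _).comp hf
    have hsurj' : ∀ v ∈ treeVerts len L, ∃ t, (swapV e ∘ f) t = v := by
      intro v hv
      have hv' : swapV e v ∈ treeVerts len L := by
        unfold swapV
        split_ifs
        exacts [mem_treeVerts_of_adj he.symm, mem_treeVerts_of_adj he, hv]
      obtain ⟨t, ht⟩ := hsurj _ hv'
      exact ⟨t, by simp [Function.comp_apply, ht, swapV_eq_swap]⟩
    have := ih (fun e' he' => hσ e' (List.mem_cons_of_mem e he')) _ hf' hsurj'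
    rw [applySwaps_cons, List.length_cons]
    simp only [cCount_cons]
    push_cast
    rw [sum_add_distrib]
    linarith [potential_swapV hf he h₁ h₂]

end Potential

section SlotPrefix

variable {m n : ℕ} {s : Fin n → Fin m}

def slotPrefix (s : Fin n → Fin m) (i : Fin m) (b : ℕ) : ℕ :=
  ∑ j ∈ univ.filter (fun j : Fin n => j.val < b), (kk' m n + if s j = i then kk m n else 0)

lemma offQ_eq_slotPrefix (i : Fin m) (j : Fin n) : offQ s i j = slotPrefix s i j := rfl

lemma slotPrefix_mono (i : Fin m) {b b' : ℕ} (h : b ≤ b') :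
    slotPrefix s i b ≤ slotPrefix s i b' :=
  sum_le_sum_of_subset fun j => by simp only [mem_filter, mem_univ, true_and]; omega

lemma slotPrefix_succ (i : Fin m) (j : Fin n) :
    slotPrefix s i (j + 1) = slotPrefix s i j + (kk' m n + if s j = i then kk m n else 0) := by
  have : univ.filter (fun j' : Fin n => j'.val < j + 1) =
      insert j (univ.filter fun j' : Fin n => j'.val < j) := by
    ext j'
    simp only [mem_filter, mem_univ, true_and, mem_insert, Fin.ext_iff]
    omega
  rw [slotPrefix, this, sum_insert (by simp), slotPrefix, add_comm]

lemma slotPrefix_eq_lenSlot (i : Fin m) : slotPrefix s i n = lenSlot s i := by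
  rw [slotPrefix, filter_true_of_mem fun j _ => j.isLt, sum_add_distrib, sum_ite, lenSlot, cnt]
  simp [mul_comm, add_comm]

lemma tOffP_add_slotPrefix_succ (i : Fin m) (j : Fin n) :
    tOffP s i j + slotPrefix s i (j + 1) = lenSlot s i := by
  rw [← slotPrefix_eq_lenSlot, tOffP, slotPrefix, slotPrefix, ← sum_filter_add_sum_filter_not
    (univ.filter fun j' : Fin n => j'.val < n) (fun j' : Fin n => j.val < j'.val)]
  congr 2 <;> ext j' <;> simp only [mem_filter, mem_univ, true_and] <;> omega

lemma lt_slotPrefix_succ {i : Fin m} {j : Fin n} {d : ℕ}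
    (hd : d < kk' m n + if s j = i then kk m n else 0) :
    slotPrefix s i j + d < lenSlot s i := by
  have := slotPrefix_mono (s := s) i (show j.val + 1 ≤ n from j.isLt)
  rw [slotPrefix_eq_lenSlot, slotPrefix_succ] at this
  omega

lemma eq_of_slotPrefix_add_eq {i : Fin m} {j j' : Fin n} {d d' : ℕ}
    (hd : d < kk' m n + if s j = i then kk m n else 0)
    (hd' : d' < kk' m n + if s j' = i then kk m n else 0)
    (h : slotPrefix s i j + d = slotPrefix s i j' + d') : j = j' ∧ d = d' := by
  have key : ∀ {j j' : Fin n} {d d' : ℕ}, d < kk' m n + (if s j = i then kk m n else 0) →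
      j < j' → slotPrefix s i j + d < slotPrefix s i j' + d' := fun {j j'} _ _ hd hlt => by
    have := slotPrefix_mono (s := s) i (show j.val + 1 ≤ j' from hlt)
    rw [slotPrefix_succ] at this
    omega
  rcases lt_trichotomy j j' with hlt | rfl | hlt
  · exact absurd h (key hd hlt).ne
  · exact ⟨rfl, by omega⟩
  · exact absurd h (key hd' hlt).ne'

end SlotPrefix

section Rank

variable {m n : ℕ} {s : Fin n → Fin m}

def NoAdjacentRepeats (s : Fin n → Fin m) : Prop :=
  ∀ (j : Fin n) (h : j.val + 1 < n), s j ≠ s ⟨j.val + 1, h⟩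

def rhoOther (s : Fin n → Fin m) (i : Fin m) (j : Fin n) : ℕ :=
  (if (nxt s j).isSome then 1 else 0) +
    (univ.filter fun i' : Fin m => i'.val < i.val ∧ i' ≠ s j ∧ some i' ≠ nxt s j).card

lemma rho_eq (i : Fin m) (j : Fin n) :
    rho s i j = if some i = nxt s j then 0 else if i = s j then m - 1 else rhoOther s i j :=
  rfl

lemma ne_of_nxt_eq_some (hs : NoAdjacentRepeats s) {i : Fin m} {j : Fin n}
    (h : nxt s j = some i) : i ≠ s j := by
  unfold nxt at h
  split_ifs at h with hj
  cases h
  exact (hs j hj).symm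

lemma rhoOther_pos {i i' : Fin m} {j : Fin n} (h : some i' = nxt s j) : 0 < rhoOther s i j := by
  simp [rhoOther, ← h]

lemma rhoOther_le (hs : NoAdjacentRepeats s) {i : Fin m} {j : Fin n}
    (h₁ : some i ≠ nxt s j) (h₂ : i ≠ s j) : rhoOther s i j ≤ m - 2 := by
  set R := (univ.erase i).erase (s j)
  have hR : R.card = m - 2 := by
    rw [card_erase_of_mem (by simpa using h₂.symm), card_erase_of_mem (mem_univ _), card_univ,
      Fintype.card_fin, Nat.sub_sub]
  have hsub : (univ.filter fun i' : Fin m => i'.val < i.val ∧ i' ≠ s j ∧ some i' ≠ nxt s j) ⊆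
      R.filter fun i' => some i' ≠ nxt s j := by
    intro i'
    simp only [R, mem_filter, mem_erase, mem_univ, and_true, true_and]
    exact fun ⟨hlt, hsj, hnxt⟩ => ⟨⟨hsj, Fin.ne_of_lt hlt⟩, hnxt⟩
  have hcard := card_le_card hsub
  rw [rhoOther]
  rcases hn : nxt s j with _ | i₀
  · simp only [hn, ne_eq, reduceCtorEq, not_false_eq_true, filter_true, Option.isSome_none,
      Bool.false_eq_true, ↓reduceIte, zero_add] at hcard ⊢
    omega
  · have hi₀ : i₀ ∈ R := by
      simp only [R, mem_erase, mem_univ, and_true]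
      exact ⟨ne_of_nxt_eq_some hs hn, fun h => h₁ (h ▸ hn.symm)⟩
    simp only [hn, ne_eq, Option.some_inj, filter_ne', Option.isSome_some, ↓reduceIte] at hcard ⊢
    rw [card_erase_of_mem hi₀, hR] at hcard
    have := card_pos.2 ⟨i₀, hi₀⟩
    omega

lemma rhoOther_lt_rhoOther {i i' : Fin m} {j : Fin n} (h₁ : some i ≠ nxt s j) (h₂ : i ≠ s j)
    (hlt : i < i') : rhoOther s i j < rhoOther s i' j := by
  unfold rhoOther
  gcongr
  rw [ssubset_iff_of_subset]
  · exact ⟨i, by simp [hlt, h₁, h₂]⟩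
  · intro a
    simp only [mem_filter, mem_univ, true_and]
    exact fun ⟨ha, h⟩ => ⟨ha.trans hlt, h⟩

lemma rho_lt (hs : NoAdjacentRepeats s) (i : Fin m) (j : Fin n) : rho s i j < m := by
  have := i.pos
  rw [rho_eq]
  split_ifs with h₁ h₂
  · exact this
  · omega
  · have := rhoOther_le hs h₁ h₂
    omega

lemma rho_injective (hs : NoAdjacentRepeats s) (j : Fin n) : Function.Injective (rho s · j) := by
  intro i i' h
  obtain hm | hm := Nat.lt_or_ge m 2
  · exact Fin.ext (by omega)
  simp only [rho_eq] at h
  split_ifs at h with a₁ b₁ b₂ a₂ b₁ b₂ b₁ b₂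
  · exact Option.some_injective _ (a₁.trans b₁.symm)
  · omega
  · exact absurd h.symm (rhoOther_pos a₁).ne'
  · omega
  · exact a₂.trans b₂.symm
  · have := rhoOther_le hs b₁ b₂
    omega
  · exact absurd h (rhoOther_pos b₁).ne'
  · have := rhoOther_le hs a₁ a₂
    omega
  · rcases lt_trichotomy i i' with hlt | rfl | hlt
    · exact absurd h (rhoOther_lt_rhoOther a₁ a₂ hlt).ne
    · rfl
    · exact absurd h (rhoOther_lt_rhoOther b₁ b₂ hlt).ne'

end Rank

section Placement

variable {m n : ℕ} {s : Fin n → Fin m}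

lemma eq_and_eq_of_mul_add_eq {B j j' a a' : ℕ} (ha : a < B) (ha' : a' < B)
    (h : j * B + a = j' * B + a') : j = j' ∧ a = a' := by
  have hB : 0 < B := by omega
  have h₁ := congrArg (· / B) h
  have h₂ := congrArg (· % B) h
  simp only [Nat.add_comm (_ * B), Nat.add_mul_div_right _ _ hB, Nat.add_mul_mod_self_right,
    Nat.div_eq_of_lt ha, Nat.div_eq_of_lt ha', Nat.mod_eq_of_lt ha, Nat.mod_eq_of_lt ha'] at h₁ h₂
  omega

lemma ord_lt_lenOrd (j : Fin n) {r : ℕ} (hr : r < kk m n + m * kk' m n) :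
    j * (kk m n + m * kk' m n) + r < lenOrd m n := by
  have : (j + 1) * (kk m n + m * kk' m n) ≤ n * (kk m n + m * kk' m n) :=
    Nat.mul_le_mul_right _ j.isLt
  rw [lenOrd]
  linarith

lemma p_offset_lt (hs : NoAdjacentRepeats s) (i : Fin m) (j : Fin n) (a : Fin (kk' m n)) :
    kk m n + rho s i j * kk' m n + a < kk m n + m * kk' m n := by
  have : (rho s i j + 1) * kk' m n ≤ m * kk' m n := Nat.mul_le_mul_right _ (rho_lt hs i j)
  have := a.isLt
  linarith

lemma x_init_lt (j : Fin n) (a : Fin (kk m n)) :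
    j * (kk m n + m * kk' m n) + a < lenOrd m n :=
  ord_lt_lenOrd j (a.isLt.trans_le (Nat.le_add_right _ _))

lemma p_init_lt (hs : NoAdjacentRepeats s) (i : Fin m) (j : Fin n) (a : Fin (kk' m n)) :
    j * (kk m n + m * kk' m n) + kk m n + rho s i j * kk' m n + a < lenOrd m n := by
  simpa only [add_assoc] using ord_lt_lenOrd j (p_offset_lt hs i j a)

lemma y_init_lt (j : Fin n) (a : Fin (kk m n)) : offQ s (s j) j + a < lenSlot s (s j) :=
  lt_slotPrefix_succ (by simp; omega)

lemma q_init_lt (i : Fin m) (j : Fin n) (a : Fin (kk' m n)) :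
    offQ s i j + (if s j = i then kk m n else 0) + a < lenSlot s i := by
  rw [add_assoc]
  exact lt_slotPrefix_succ (by have := a.isLt; split_ifs <;> omega)

lemma x_tgt_lt (j : Fin n) (a : Fin (kk m n)) :
    tOffP s (s j) j + kk' m n + (kk m n - 1 - a) < lenSlot s (s j) := by
  have := tOffP_add_slotPrefix_succ (s := s) (s j) j
  rw [slotPrefix_succ, if_pos rfl] at this
  omega

lemma p_tgt_lt (i : Fin m) (j : Fin n) (a : Fin (kk' m n)) :
    tOffP s i j + (kk' m n - 1 - a) < lenSlot s i := by
  have := tOffP_add_slotPrefix_succ (s := s) i j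
  rw [slotPrefix_succ] at this
  have := a.isLt
  omega

lemma y_tgt_lt (j : Fin n) (a : Fin (kk m n)) :
    lenOrd m n - 1 - (j * (kk m n + m * kk' m n) + a) < lenOrd m n := by
  have := x_init_lt j a
  omega

lemma q_tgt_lt (hs : NoAdjacentRepeats s) (i : Fin m) (j : Fin n) (a : Fin (kk' m n)) :
    lenOrd m n - 1 - (j * (kk m n + m * kk' m n) + kk m n + rho s i j * kk' m n + a) <
      lenOrd m n := by
  have := p_init_lt hs i j a
  omega

lemma initTok_mem_treeVerts (hs : NoAdjacentRepeats s) (t : Tok m n) :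
    initTok s t ∈ treeVerts (lenSlot s) (lenOrd m n) := by
  rcases t with (_ | i) | ⟨j, a⟩ | ⟨j, a⟩ | ⟨i, j, a⟩ | ⟨i, j, a⟩ <;> rw [initTok, mem_treeVerts]
  exacts [trivial, trivial, x_init_lt j a, y_init_lt j a, p_init_lt hs i j a, q_init_lt i j a]

lemma x_init_ne_p_init (hs : NoAdjacentRepeats s) (j j' : Fin n) (a : Fin (kk m n)) (i' : Fin m)
    (a' : Fin (kk' m n)) :
    j * (kk m n + m * kk' m n) + a ≠
      j' * (kk m n + m * kk' m n) + kk m n + rho s i' j' * kk' m n + a' := by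
  intro h
  have := (eq_and_eq_of_mul_add_eq (j := j) (j' := j') (a.isLt.trans_le (Nat.le_add_right _ _))
    (p_offset_lt hs i' j' a') (by linarith)).2
  omega

lemma eq_of_p_init_eq (hs : NoAdjacentRepeats s) {i i' : Fin m} {j j' : Fin n}
    {a a' : Fin (kk' m n)}
    (h : j * (kk m n + m * kk' m n) + kk m n + rho s i j * kk' m n + a =
      j' * (kk m n + m * kk' m n) + kk m n + rho s i' j' * kk' m n + a') :
    i = i' ∧ j = j' ∧ a = a' := by
  obtain ⟨hj, hr⟩ := eq_and_eq_of_mul_add_eq (j := j) (j' := j') (p_offset_lt hs i j a)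
    (p_offset_lt hs i' j' a') (by linarith)
  obtain rfl : j = j' := Fin.ext hj
  obtain ⟨hi, ha⟩ := eq_and_eq_of_mul_add_eq (j := rho s i j) (j' := rho s i' j) a.isLt a'.isLt
    (by linarith)
  exact ⟨rho_injective hs j hi, rfl, Fin.ext ha⟩

lemma y_init_ne_q_init (j j' : Fin n) (a : Fin (kk m n)) (a' : Fin (kk' m n)) :
    offQ s (s j) j + a ≠ offQ s (s j) j' + (if s j' = s j then kk m n else 0) + a' := by
  intro h
  rw [offQ_eq_slotPrefix, offQ_eq_slotPrefix, add_assoc] at h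
  obtain ⟨rfl, ha⟩ := eq_of_slotPrefix_add_eq (by simp; omega) (by split_ifs <;> omega) h
  simp only [if_true] at ha
  omega

lemma initTok_injective (hs : NoAdjacentRepeats s) : Function.Injective (initTok s) := by
  have hk : kk m n ≤ kk m n + m * kk' m n := Nat.le_add_right _ _
  rintro ((_ | i) | ⟨j, a⟩ | ⟨j, a⟩ | ⟨i, j, a⟩ | ⟨i, j, a⟩)
    ((_ | i') | ⟨j', a'⟩ | ⟨j', a'⟩ | ⟨i', j', a'⟩ | ⟨i', j', a'⟩) h <;>
    simp only [initTok, reduceCtorEq, Vtx.nook.injEq, Vtx.ord.injEq, Vtx.slot.injEq] at h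
  case inl.none.inl.none => rfl
  case inl.some.inl.some => rw [h]
  case inr.inl.inr.inl =>
    obtain ⟨hj, ha⟩ := eq_and_eq_of_mul_add_eq (a.isLt.trans_le hk) (a'.isLt.trans_le hk) h
    rw [Fin.ext hj, Fin.ext ha]
  case inr.inl.inr.inr.inr.inl => exact absurd h (x_init_ne_p_init hs j j' a i' a')
  case inr.inr.inr.inl.inr.inl => exact absurd h.symm (x_init_ne_p_init hs j' j a' i a)
  case inr.inr.inr.inl.inr.inr.inr.inl =>
    obtain ⟨rfl, rfl, rfl⟩ := eq_of_p_init_eq hs h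
    rfl
  case inr.inr.inl.inr.inr.inl =>
    obtain ⟨hi, h⟩ := h
    rw [offQ_eq_slotPrefix, offQ_eq_slotPrefix, ← hi] at h
    obtain ⟨rfl, ha⟩ := eq_of_slotPrefix_add_eq (by simp; omega) (by simp [hi]; omega) h
    rw [Fin.ext ha]
  case inr.inr.inl.inr.inr.inr.inr =>
    obtain ⟨rfl, h⟩ := h
    exact absurd h (y_init_ne_q_init j j' a a')
  case inr.inr.inr.inr.inr.inr.inl =>
    obtain ⟨rfl, h⟩ := h
    exact absurd h.symm (y_init_ne_q_init j' j a' a)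
  case inr.inr.inr.inr.inr.inr.inr.inr =>
    obtain ⟨rfl, h⟩ := h
    rw [offQ_eq_slotPrefix, offQ_eq_slotPrefix, add_assoc, add_assoc] at h
    obtain ⟨rfl, ha⟩ := eq_of_slotPrefix_add_eq (by split_ifs <;> omega) (by split_ifs <;> omega) h
    rw [Fin.ext (Nat.add_left_cancel ha)]

end Placement

section Occupancy

variable {m n : ℕ} {s : Fin n → Fin m}

lemma sum_lenSlot (s : Fin n → Fin m) : ∑ i, lenSlot s i = n * kk m n + m * (n * kk' m n) := by
  have hcnt : ∑ i, cnt s i = n := by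
    simpa [cnt] using
      (card_eq_sum_card_fiberwise (f := s) (s := univ) (t := univ) fun j _ => mem_univ _).symm
  simp only [lenSlot, sum_add_distrib, ← sum_mul, hcnt, sum_const, card_univ, Fintype.card_fin,
    smul_eq_mul]
  ring

lemma card_tok_eq_card_treeVerts (s : Fin n → Fin m) :
    Fintype.card (Tok m n) = #(treeVerts (lenSlot s) (lenOrd m n)) := by
  rw [card_treeVerts, sum_lenSlot]
  simp only [Fintype.card_sum, Fintype.card_option, Fintype.card_prod, Fintype.card_fin, lenOrd]
  ring

lemma exists_initTok_eq (hs : NoAdjacentRepeats s) {v : Vtx m}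
    (hv : v ∈ treeVerts (lenSlot s) (lenOrd m n)) : ∃ t, initTok s t = v := by
  have himage : univ.image (initTok s) = treeVerts (lenSlot s) (lenOrd m n) := by
    refine eq_of_subset_of_card_le (image_subset_iff.2 fun t _ => initTok_mem_treeVerts hs t) ?_
    rw [card_image_of_injective _ (initTok_injective hs), card_univ, card_tok_eq_card_treeVerts]
  simpa [← himage] using hv

end Occupancy

section Distance

variable {m n : ℕ} {s : Fin n → Fin m}

lemma tokSign_mul_height_sub_eq_dd (hs : NoAdjacentRepeats s) (π : Equiv.Perm (Option (Fin m)))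
    (t : NonItem m n) :
    tokSign (.inr t : Tok m n) *
        (height (kk m n) (initTok s (.inr t)) - height (kk m n) (tgtTok s π (.inr t))) =
      dd s π (.inr t) := by
  rcases t with ⟨j, a⟩ | ⟨j, a⟩ | ⟨i, j, a⟩ | ⟨i, j, a⟩ <;> rw [dd, initTok, tgtTok, TheGraph]
  · rw [SimpleGraph.dist_comm, dist_slot_ord (x_tgt_lt j a) (x_init_lt j a)]
    simp only [tokSign, height]; push_cast; ring
  · rw [dist_slot_ord (y_init_lt j a) (y_tgt_lt j a)]
    simp only [tokSign, height]; push_cast; ring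
  · rw [SimpleGraph.dist_comm, dist_slot_ord (p_tgt_lt i j a) (p_init_lt hs i j a)]
    simp only [tokSign, height]; push_cast; ring
  · rw [dist_slot_ord (q_init_lt i j a) (q_tgt_lt hs i j a)]
    simp only [tokSign, height]; push_cast; ring

lemma height_tgtTok_item {π : Equiv.Perm (Option (Fin m))} (hπ : π none = none)
    (k : ℕ) (o : Option (Fin m)) :
    height k (tgtTok s π (.inl o)) = height k (initTok s (.inl o)) := by
  rcases o with _ | i
  · rw [tgtTok, hπ]
    rfl
  · obtain ⟨i', hi'⟩ := Option.ne_none_iff_exists'.1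
      (π.injective.ne (show some i ≠ none by simp) |>.trans_eq hπ)
    rw [tgtTok, hi']
    rfl

lemma potential_initTok_sub_tgtTok (hs : NoAdjacentRepeats s) {π : Equiv.Perm (Option (Fin m))}
    (hπ : π none = none) :
    potential (kk m n) (initTok s) - potential (kk m n) (tgtTok s π) =
      ∑ t : NonItem m n, (dd s π (.inr t) : ℤ) := by
  rw [potential, potential, ← sum_sub_distrib, Fintype.sum_sum_type]
  simp only [height_tgtTok_item hπ, sub_self, sum_const_zero, zero_add, ← mul_sub,
    tokSign_mul_height_sub_eq_dd hs]

end Distance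

theorem total_moves_eq_general {m n : ℕ}
    (s : Fin n → Fin m) (π : Equiv.Perm (Option (Fin m)))
    (hπ0 : π none = none)
    (hcons : ∀ (j : Fin n) (h : j.val + 1 < n), s j ≠ s ⟨j.val + 1, h⟩)
    (σ : List (Vtx m × Vtx m))
    (hedges : ∀ e ∈ σ, (TheGraph s).Adj e.1 e.2)
    (hsol : applySwaps σ (initTok s) = tgtTok s π) :
    2 * σ.length =
      (∑ t : NonItem m n, dd s π (Sum.inr t)) +
        2 * ∑ t : Tok m n, cCount t σ (initTok s) := by
  have hmoves := potential_applySwaps σ hedges (initTok s) (initTok_injective hcons)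
    fun _ => exists_initTok_eq hcons
  rw [hsol] at hmoves
  have hdist := potential_initTok_sub_tgtTok hcons hπ0
  zify
  linarith

theorem total_moves_eq {m n : ℕ}
    (s : Fin n → Fin m) (π : Equiv.Perm (Option (Fin m)))
    (hπ0 : π none = none)
    (hocc : ∀ i : Fin m, ∃ j, s j = i)
    (hcons : ∀ (j : Fin n) (h : j.val + 1 < n), s j ≠ s ⟨j.val + 1, h⟩)
    (σ : List (Vtx m × Vtx m))
    (hedges : ∀ e ∈ σ, (TheGraph s).Adj e.1 e.2)
    (hsol : applySwaps σ (initTok s) = tgtTok s π) :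
    2 * σ.length =
      (∑ t : NonItem m n, dd s π (Sum.inr t)) +
        2 * ∑ t : Tok m n, cCount t σ (initTok s) :=
  total_moves_eq_general s π hπ0 hcons σ hedges hsol

end UnweightedTS
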